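/- arXiv:1602.09040 — 4 statements merged into one kernel-verified Lean document; each statement's English description precedes it below -/
import Mathlib

section
/- Let u : D → ℝ² be a smooth solution on the closed unit disc of Δv + v(1-|v|²)/ε² = ω(k v + (1/m)(y⊥·∇)v⊥) with |v| = 1 on ∂D. Then the function φ = |v|² satisfies the differential inequality Δφ - φ·(2ωk - 2(1-|v|²)/ε² - (ω²/m²)|y|²) ≥ 0 in D. -/
/-- First partial derivative in the `y₁` direction. -/
noncomputable def pd1 (f : ℝ × ℝ → ℝ) (y : ℝ × ℝ) : ℝ := fderiv ℝ f y (1, 0)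

/-- First partial derivative in the `y₂` direction. -/
noncomputable def pd2 (f : ℝ × ℝ → ℝ) (y : ℝ × ℝ) : ℝ := fderiv ℝ f y (0, 1)

/-- Laplacian of a scalar function on `ℝ²`. -/
noncomputable def lap (f : ℝ × ℝ → ℝ) (y : ℝ × ℝ) : ℝ := pd1 (pd1 f) y + pd2 (pd2 f) y

lemma contDiff_pd (f : ℝ × ℝ → ℝ) (hf : ContDiff ℝ (⊤ : ℕ∞) f) (w : ℝ × ℝ) :
    ContDiff ℝ (⊤ : ℕ∞) fun y => fderiv ℝ f y w :=
  (hf.fderiv_right (by simp)).clm_apply contDiff_const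

lemma pd_add (f g : ℝ × ℝ → ℝ) (hf : Differentiable ℝ f) (hg : Differentiable ℝ g)
    (w y : ℝ × ℝ) :
    fderiv ℝ (fun z => f z + g z) y w = fderiv ℝ f y w + fderiv ℝ g y w := by
  rw [fderiv_fun_add (hf y) (hg y)]; rfl

lemma pd_mul (f g : ℝ × ℝ → ℝ) (hf : Differentiable ℝ f) (hg : Differentiable ℝ g)
    (w y : ℝ × ℝ) :
    fderiv ℝ (fun z => f z * g z) y w = f y * fderiv ℝ g y w + g y * fderiv ℝ f y w := by
  rw [fderiv_fun_mul (hf y) (hg y)]; simp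

lemma pd_sq (f : ℝ × ℝ → ℝ) (hf : Differentiable ℝ f) (w y : ℝ × ℝ) :
    fderiv ℝ (fun z => f z ^ 2) y w = 2 * f y * fderiv ℝ f y w := by
  have : (fun z => f z ^ 2) = fun z => f z * f z := by funext z; ring
  rw [this, pd_mul f f hf hf]; ring

lemma pd_const_mul (f : ℝ × ℝ → ℝ) (hf : Differentiable ℝ f) (c : ℝ) (w y : ℝ × ℝ) :
    fderiv ℝ (fun z => c * f z) y w = c * fderiv ℝ f y w := by
  rw [fderiv_const_mul (hf y)]; simp

lemma pd_pd_sq (f1 f2 : ℝ × ℝ → ℝ) (h1 : ContDiff ℝ (⊤ : ℕ∞) f1) (h2 : ContDiff ℝ (⊤ : ℕ∞) f2)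
    (w y : ℝ × ℝ) :
    fderiv ℝ (fun y' => fderiv ℝ (fun z => f1 z ^ 2 + f2 z ^ 2) y' w) y w =
      2 * (fderiv ℝ f1 y w) ^ 2 + 2 * f1 y * fderiv ℝ (fun y' => fderiv ℝ f1 y' w) y w +
      2 * (fderiv ℝ f2 y w) ^ 2 + 2 * f2 y * fderiv ℝ (fun y' => fderiv ℝ f2 y' w) y w := by
  have d1 : Differentiable ℝ f1 := h1.differentiable (by simp)
  have d2 : Differentiable ℝ f2 := h2.differentiable (by simp)
  have p1 : Differentiable ℝ (fun y' => fderiv ℝ f1 y' w) :=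
    (contDiff_pd f1 h1 w).differentiable (by simp)
  have p2 : Differentiable ℝ (fun y' => fderiv ℝ f2 y' w) :=
    (contDiff_pd f2 h2 w).differentiable (by simp)
  have hfun : (fun y' => fderiv ℝ (fun z => f1 z ^ 2 + f2 z ^ 2) y' w) =
      fun y' => 2 * (f1 y' * fderiv ℝ f1 y' w) + 2 * (f2 y' * fderiv ℝ f2 y' w) := by
    funext y'
    rw [pd_add (fun z => f1 z ^ 2) (fun z => f2 z ^ 2) (fun z => (d1 z).pow 2) (fun z => (d2 z).pow 2), pd_sq f1 d1, pd_sq f2 d2]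
    ring
  rw [hfun, pd_add (fun z => 2 * (f1 z * fderiv ℝ f1 z w)) (fun z => 2 * (f2 z * fderiv ℝ f2 z w)) (((d1.mul p1).const_mul 2)) (((d2.mul p2).const_mul 2)),
    pd_const_mul (fun z => f1 z * fderiv ℝ f1 z w) (d1.mul p1), pd_const_mul (fun z => f2 z * fderiv ℝ f2 z w) (d2.mul p2),
    pd_mul f1 _ d1 p1, pd_mul f2 _ d2 p2]
  ring

lemma lap_sq (f1 f2 : ℝ × ℝ → ℝ) (h1 : ContDiff ℝ (⊤ : ℕ∞) f1) (h2 : ContDiff ℝ (⊤ : ℕ∞) f2) (y : ℝ × ℝ) :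
    lap (fun z => f1 z ^ 2 + f2 z ^ 2) y =
      2 * (pd1 f1 y) ^ 2 + 2 * (pd2 f1 y) ^ 2 + 2 * (pd1 f2 y) ^ 2 + 2 * (pd2 f2 y) ^ 2 +
      2 * f1 y * lap f1 y + 2 * f2 y * lap f2 y := by
  unfold lap pd1 pd2
  rw [pd_pd_sq f1 f2 h1 h2 (1, 0) y, pd_pd_sq f1 f2 h1 h2 (0, 1) y]
  ring

/-- If `v` solves `Δv + v(1-|v|²)/ε² = ω(kv + (1/m)(y⊥·∇)v⊥)` in the unit disc `D`
with `|v| = 1` on `∂D`, then `φ = |v|²` satisfies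
`Δφ - φ (2ωk - 2(1-|v|²)/ε² - (ω²/m²)|y|²) ≥ 0` in `D`. -/
theorem modulus_squared_differential_inequality
    (ε ω : ℝ) (hε : 0 < ε) (k m : ℤ) (hk : k ≠ 0) (hm : m ≠ 0)
    (v : ℝ × ℝ → ℝ × ℝ) (hv : ContDiff ℝ (⊤ : ℕ∞) v)
    (hbc : ∀ y : ℝ × ℝ, y.1 ^ 2 + y.2 ^ 2 = 1 → (v y).1 ^ 2 + (v y).2 ^ 2 = 1)
    (hpde1 : ∀ y : ℝ × ℝ, y.1 ^ 2 + y.2 ^ 2 < 1 →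
      lap (fun z => (v z).1) y + (v y).1 * (1 - ((v y).1 ^ 2 + (v y).2 ^ 2)) / ε ^ 2 =
        ω * ((k : ℝ) * (v y).1 + (1 / (m : ℝ)) *
          (-(y.2) * pd1 (fun z => -(v z).2) y + y.1 * pd2 (fun z => -(v z).2) y)))
    (hpde2 : ∀ y : ℝ × ℝ, y.1 ^ 2 + y.2 ^ 2 < 1 →
      lap (fun z => (v z).2) y + (v y).2 * (1 - ((v y).1 ^ 2 + (v y).2 ^ 2)) / ε ^ 2 =
        ω * ((k : ℝ) * (v y).2 + (1 / (m : ℝ)) *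
          (-(y.2) * pd1 (fun z => (v z).1) y + y.1 * pd2 (fun z => (v z).1) y))) :
    ∀ y : ℝ × ℝ, y.1 ^ 2 + y.2 ^ 2 < 1 →
      0 ≤ lap (fun z => (v z).1 ^ 2 + (v z).2 ^ 2) y -
        ((v y).1 ^ 2 + (v y).2 ^ 2) *
          (2 * ω * (k : ℝ) - 2 * (1 - ((v y).1 ^ 2 + (v y).2 ^ 2)) / ε ^ 2 -
            (ω ^ 2 / (m : ℝ) ^ 2) * (y.1 ^ 2 + y.2 ^ 2)) := by
  intro y hy
  set f1 : ℝ × ℝ → ℝ := fun z => (v z).1 with hf1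
  set f2 : ℝ × ℝ → ℝ := fun z => (v z).2 with hf2
  have h1 : ContDiff ℝ (⊤ : ℕ∞) f1 := contDiff_fst.comp hv
  have h2 : ContDiff ℝ (⊤ : ℕ∞) f2 := contDiff_snd.comp hv
  have e1 := hpde1 y hy
  have e2 := hpde2 y hy
  have hneg1 : pd1 (fun z => -(v z).2) y = -pd1 f2 y := by
    unfold pd1; rw [show (fun z => -(v z).2) = fun z => -f2 z from rfl, fderiv_fun_neg]; simp
  have hneg2 : pd2 (fun z => -(v z).2) y = -pd2 f2 y := by
    unfold pd2; rw [show (fun z => -(v z).2) = fun z => -f2 z from rfl, fderiv_fun_neg]; simp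
  rw [hneg1, hneg2] at e1
  rw [lap_sq f1 f2 h1 h2 y]
  set a := pd1 f1 y
  set b := pd2 f1 y
  set c := pd1 f2 y
  set d := pd2 f2 y
  have hL1 : lap f1 y = ω * ((k : ℝ) * f1 y + (1 / (m : ℝ)) * (-(y.2) * (-c) + y.1 * (-d)))
      - f1 y * (1 - (f1 y ^ 2 + f2 y ^ 2)) / ε ^ 2 := by linarith [e1]
  have hL2 : lap f2 y = ω * ((k : ℝ) * f2 y + (1 / (m : ℝ)) * (-(y.2) * a + y.1 * b))
      - f2 y * (1 - (f1 y ^ 2 + f2 y ^ 2)) / ε ^ 2 := by linarith [e2]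
  rw [hL1, hL2]
  set μ : ℝ := ω / (m : ℝ) with hμ
  have key : 2 * a ^ 2 + 2 * b ^ 2 + 2 * c ^ 2 + 2 * d ^ 2 +
      2 * f1 y * (ω * ((k : ℝ) * f1 y + (1 / (m : ℝ)) * (-(y.2) * (-c) + y.1 * (-d)))
        - f1 y * (1 - (f1 y ^ 2 + f2 y ^ 2)) / ε ^ 2) +
      2 * f2 y * (ω * ((k : ℝ) * f2 y + (1 / (m : ℝ)) * (-(y.2) * a + y.1 * b))
        - f2 y * (1 - (f1 y ^ 2 + f2 y ^ 2)) / ε ^ 2) -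
      (f1 y ^ 2 + f2 y ^ 2) *
        (2 * ω * (k : ℝ) - 2 * (1 - (f1 y ^ 2 + f2 y ^ 2)) / ε ^ 2 -
          (ω ^ 2 / (m : ℝ) ^ 2) * (y.1 ^ 2 + y.2 ^ 2)) =
      a ^ 2 + b ^ 2 + c ^ 2 + d ^ 2 + (a - μ * f2 y * y.2) ^ 2 + (b + μ * f2 y * y.1) ^ 2 +
      (c + μ * f1 y * y.2) ^ 2 + (d - μ * f1 y * y.1) ^ 2 := by
    rw [hμ]; field_simp; ring
  rw [key]
  positivity
end

section
/- For a smooth map v : D̄ → ℝ² equal to g_n(θ) = e^{inθ} on ∂D, the integral of the Jacobian satisfies ∫_D Jv dy = nπ, where Jv = ∂₁v¹∂₂v² - ∂₁v²∂₂v¹. -/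
open MeasureTheory Real

open Set

noncomputable section IntJacAux

namespace IntJacAux

variable (v : ℝ × ℝ → ℝ × ℝ)

/-- The Jacobian determinant of `v`. -/
def J (y : ℝ × ℝ) : ℝ :=
  (fderiv ℝ v y (1, 0)).1 * (fderiv ℝ v y (0, 1)).2 -
    (fderiv ℝ v y (1, 0)).2 * (fderiv ℝ v y (0, 1)).1

/-- `v` in polar coordinates. -/
def w (p : ℝ × ℝ) : ℝ × ℝ := v (p.1 * Real.cos p.2, p.1 * Real.sin p.2)

def wr (p : ℝ × ℝ) : ℝ × ℝ := fderiv ℝ (w v) p (1, 0)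
def wθ (p : ℝ × ℝ) : ℝ × ℝ := fderiv ℝ (w v) p (0, 1)

def F (p : ℝ × ℝ) : ℝ := (1/2) * ((w v p).1 * (wθ v p).2 - (w v p).2 * (wθ v p).1)
def G (p : ℝ × ℝ) : ℝ := (-1/2 : ℝ) * ((w v p).1 * (wr v p).2 - (w v p).2 * (wr v p).1)

variable {v} (hv : ContDiff ℝ (⊤ : ℕ∞) v)
include hv

lemma hw : ContDiff ℝ (⊤ : ℕ∞) (w v) :=
  hv.comp ((contDiff_fst.mul (Real.contDiff_cos.comp contDiff_snd)).prodMk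
    (contDiff_fst.mul (Real.contDiff_sin.comp contDiff_snd)))

lemma hW : ContDiff ℝ (⊤ : ℕ∞) (fderiv ℝ (w v)) := (hw hv).fderiv_right (by simp)

lemma hwr : ContDiff ℝ (⊤ : ℕ∞) (wr v) := (hW hv).clm_apply contDiff_const
lemma hwθ : ContDiff ℝ (⊤ : ℕ∞) (wθ v) := (hW hv).clm_apply contDiff_const

lemma hF : ContDiff ℝ (⊤ : ℕ∞) (F v) :=
  contDiff_const.mul ((((hw hv).fst).mul ((hwθ hv).snd)).sub (((hw hv).snd).mul ((hwθ hv).fst)))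

lemma hG : ContDiff ℝ (⊤ : ℕ∞) (G v) :=
  contDiff_const.mul ((((hw hv).fst).mul ((hwr hv).snd)).sub (((hw hv).snd).mul ((hwr hv).fst)))

/-- radial curve derivative -/
lemma hasDerivAt_w_r (r θ : ℝ) :
    HasDerivAt (fun t => w v (t, θ)) (wr v (r, θ)) r :=
  (((hw hv).differentiable (by simp) (r, θ)).hasFDerivAt).comp_hasDerivAt (l := w v) (f := fun t => (t, θ)) r
    ((hasDerivAt_id r).prodMk (hasDerivAt_const r θ))

/-- angular curve derivative -/
lemma hasDerivAt_w_θ (r θ : ℝ) :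
    HasDerivAt (fun t => w v (r, t)) (wθ v (r, θ)) θ :=
  (((hw hv).differentiable (by simp) (r, θ)).hasFDerivAt).comp_hasDerivAt (l := w v) (f := fun t => (r, t)) θ
    ((hasDerivAt_const θ r).prodMk (hasDerivAt_id θ))

lemma wr_eq (p : ℝ × ℝ) :
    wr v p = fderiv ℝ v (p.1 * Real.cos p.2, p.1 * Real.sin p.2)
      (Real.cos p.2, Real.sin p.2) := by
  have h2 : HasDerivAt (fun t : ℝ => v (t * Real.cos p.2, t * Real.sin p.2))
      (fderiv ℝ v (p.1 * Real.cos p.2, p.1 * Real.sin p.2) (Real.cos p.2, Real.sin p.2)) p.1 :=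
    ((hv.differentiable (by simp) _).hasFDerivAt).comp_hasDerivAt p.1
      ((hasDerivAt_mul_const _).prodMk (hasDerivAt_mul_const _))
  exact (hasDerivAt_w_r hv p.1 p.2).unique h2

lemma wθ_eq (p : ℝ × ℝ) :
    wθ v p = fderiv ℝ v (p.1 * Real.cos p.2, p.1 * Real.sin p.2)
      (p.1 * -Real.sin p.2, p.1 * Real.cos p.2) := by
  have h2 : HasDerivAt (fun t : ℝ => v (p.1 * Real.cos t, p.1 * Real.sin t))
      (fderiv ℝ v (p.1 * Real.cos p.2, p.1 * Real.sin p.2)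
        (p.1 * -Real.sin p.2, p.1 * Real.cos p.2)) p.2 :=
    ((hv.differentiable (by simp) _).hasFDerivAt).comp_hasDerivAt p.2
      (((Real.hasDerivAt_cos p.2).const_mul p.1).prodMk
        ((Real.hasDerivAt_sin p.2).const_mul p.1))
  exact (hasDerivAt_w_θ hv p.1 p.2).unique h2

omit hv in
lemma clm_pair (A : ℝ × ℝ →L[ℝ] ℝ × ℝ) (a b : ℝ) : A (a, b) = a • A (1, 0) + b • A (0, 1) := by
  have : (a, b) = a • ((1:ℝ), (0:ℝ)) + b • ((0:ℝ), (1:ℝ)) := by simp [Prod.ext_iff]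
  rw [this, map_add, A.map_smul, A.map_smul]

/-- The cross product of the polar partial derivatives is `r` times the Jacobian. -/
lemma cross_eq (p : ℝ × ℝ) :
    (wr v p).1 * (wθ v p).2 - (wr v p).2 * (wθ v p).1
      = p.1 * J v (p.1 * Real.cos p.2, p.1 * Real.sin p.2) := by
  rw [wr_eq hv, wθ_eq hv, clm_pair _ (Real.cos p.2) (Real.sin p.2),
    clm_pair _ (p.1 * -Real.sin p.2) (p.1 * Real.cos p.2)]
  simp only [J, Prod.fst_add, Prod.snd_add, Prod.smul_fst, Prod.smul_snd, smul_eq_mul]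
  set A := fderiv ℝ v (p.1 * Real.cos p.2, p.1 * Real.sin p.2) with hA
  have h1 := Real.sin_sq_add_cos_sq p.2
  linear_combination (p.1 * ((A (1, 0)).1 * (A (0, 1)).2 - (A (1, 0)).2 * (A (0, 1)).1)) * h1

/-- Green/divergence integrand identity. -/
lemma divergence_eq (p : ℝ × ℝ) :
    fderiv ℝ (F v) p (1, 0) + fderiv ℝ (G v) p (0, 1)
      = (wr v p).1 * (wθ v p).2 - (wr v p).2 * (wθ v p).1 := by
  have hwd : ∀ y, HasFDerivAt (w v) (fderiv ℝ (w v) y) y :=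
    fun y => ((hw hv).differentiable (by simp) y).hasFDerivAt
  have hWd : HasFDerivAt (fderiv ℝ (w v)) (fderiv ℝ (fderiv ℝ (w v)) p) p :=
    (((hW hv).differentiable (by simp)) p).hasFDerivAt
  set H := fderiv ℝ (fderiv ℝ (w v)) p with hH
  have hsymm : H (1, 0) (0, 1) = H (0, 1) (1, 0) :=
    second_derivative_symmetric hwd hWd _ _
  have hθd : HasFDerivAt (wθ v)
      ((ContinuousLinearMap.apply ℝ (ℝ × ℝ) ((0:ℝ), (1:ℝ))).comp H) p :=
    ((ContinuousLinearMap.apply ℝ (ℝ × ℝ) ((0:ℝ), (1:ℝ))).hasFDerivAt).comp p hWd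
  have hrd : HasFDerivAt (wr v)
      ((ContinuousLinearMap.apply ℝ (ℝ × ℝ) ((1:ℝ), (0:ℝ))).comp H) p :=
    ((ContinuousLinearMap.apply ℝ (ℝ × ℝ) ((1:ℝ), (0:ℝ))).hasFDerivAt).comp p hWd
  have hF' : HasFDerivAt (F v)
      (((1:ℝ)/2) • ((((w v p).1 • ((ContinuousLinearMap.snd ℝ ℝ ℝ).comp
            ((ContinuousLinearMap.apply ℝ (ℝ × ℝ) ((0:ℝ), (1:ℝ))).comp H))
          + (wθ v p).2 • ((ContinuousLinearMap.fst ℝ ℝ ℝ).comp (fderiv ℝ (w v) p))))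
        - (((w v p).2 • ((ContinuousLinearMap.fst ℝ ℝ ℝ).comp
            ((ContinuousLinearMap.apply ℝ (ℝ × ℝ) ((0:ℝ), (1:ℝ))).comp H))
          + (wθ v p).1 • ((ContinuousLinearMap.snd ℝ ℝ ℝ).comp (fderiv ℝ (w v) p)))))) p :=
    ((((hwd p).fst.mul hθd.snd)).sub ((hwd p).snd.mul hθd.fst)).const_mul (1/2)
  have hG' : HasFDerivAt (G v)
      ((-(1:ℝ)/2) • ((((w v p).1 • ((ContinuousLinearMap.snd ℝ ℝ ℝ).comp
            ((ContinuousLinearMap.apply ℝ (ℝ × ℝ) ((1:ℝ), (0:ℝ))).comp H))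
          + (wr v p).2 • ((ContinuousLinearMap.fst ℝ ℝ ℝ).comp (fderiv ℝ (w v) p))))
        - (((w v p).2 • ((ContinuousLinearMap.fst ℝ ℝ ℝ).comp
            ((ContinuousLinearMap.apply ℝ (ℝ × ℝ) ((1:ℝ), (0:ℝ))).comp H))
          + (wr v p).1 • ((ContinuousLinearMap.snd ℝ ℝ ℝ).comp (fderiv ℝ (w v) p)))))) p :=
    ((((hwd p).fst.mul hrd.snd)).sub ((hwd p).snd.mul hrd.fst)).const_mul (-1/2)
  rw [hF'.fderiv, hG'.fderiv]
  simp only [ContinuousLinearMap.smul_apply, ContinuousLinearMap.sub_apply,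
    ContinuousLinearMap.add_apply, ContinuousLinearMap.coe_comp', Function.comp_apply,
    ContinuousLinearMap.coe_fst', ContinuousLinearMap.coe_snd',
    ContinuousLinearMap.apply_apply, smul_eq_mul]
  rw [show fderiv ℝ (w v) p (1, 0) = wr v p from rfl,
    show fderiv ℝ (w v) p (0, 1) = wθ v p from rfl, hsymm]
  ring

lemma G_pi (r : ℝ) : G v (r, π) = G v (r, -π) := by
  have hfun : (fun t => w v (t, π)) = fun t => w v (t, -π) := by
    funext t; simp [w]
  have hw_eq : w v (r, π) = w v (r, -π) := congrFun hfun r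
  have h1 := hasDerivAt_w_r hv r π
  rw [hfun] at h1
  have hwr_eq : wr v (r, π) = wr v (r, -π) := h1.unique (hasDerivAt_w_r hv r (-π))
  simp [G, hw_eq, hwr_eq]

lemma wθ_zero (θ : ℝ) : wθ v (0, θ) = 0 := by
  have hfun : (fun t => w v (0, t)) = fun _ => v (0, 0) := by
    funext t; simp [w]
  have h1 := hasDerivAt_w_θ hv 0 θ
  rw [hfun] at h1
  exact h1.unique (hasDerivAt_const θ (v (0, 0)))

lemma F_zero (θ : ℝ) : F v (0, θ) = 0 := by simp [F, wθ_zero hv]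

variable {n : ℤ} (hbc : ∀ θ : ℝ, v (Real.cos θ, Real.sin θ) =
    (Real.cos ((n : ℝ) * θ), Real.sin ((n : ℝ) * θ)))
include hbc

lemma w_one (θ : ℝ) : w v (1, θ) = (Real.cos ((n : ℝ) * θ), Real.sin ((n : ℝ) * θ)) := by
  simp only [w, one_mul]; exact hbc θ

lemma wθ_one (θ : ℝ) :
    wθ v (1, θ) = (-Real.sin ((n : ℝ) * θ) * (n : ℝ), Real.cos ((n : ℝ) * θ) * (n : ℝ)) := by
  have h0 : HasDerivAt (fun t : ℝ => (n : ℝ) * t) (n : ℝ) θ := by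
    simpa using (hasDerivAt_id θ).const_mul (n : ℝ)
  have hc : HasDerivAt (fun t : ℝ => Real.cos ((n : ℝ) * t))
      (-Real.sin ((n : ℝ) * θ) * (n : ℝ)) θ := (Real.hasDerivAt_cos _).comp θ h0
  have hs : HasDerivAt (fun t : ℝ => Real.sin ((n : ℝ) * t))
      (Real.cos ((n : ℝ) * θ) * (n : ℝ)) θ := (Real.hasDerivAt_sin _).comp θ h0
  have hfun : (fun t => w v (1, t))
      = fun t => (Real.cos ((n : ℝ) * t), Real.sin ((n : ℝ) * t)) := funext (w_one hv hbc)
  have h1 := hasDerivAt_w_θ hv 1 θ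
  rw [hfun] at h1
  exact h1.unique (hc.prodMk hs)

lemma F_one (θ : ℝ) : F v (1, θ) = (n : ℝ) / 2 := by
  rw [F, w_one hv hbc, wθ_one hv hbc]
  have h1 := Real.sin_sq_add_cos_sq ((n : ℝ) * θ)
  dsimp only
  linear_combination ((n : ℝ) / 2) * h1

end IntJacAux

/-- For a smooth map `v : D̄ → ℝ²` equal to `g_n(θ) = e^{inθ}` on the boundary circle,
the integral of the Jacobian over the unit disc equals `nπ`. -/
theorem integral_jacobian_eq_degree (n : ℤ) (v : ℝ × ℝ → ℝ × ℝ) (hv : ContDiff ℝ (⊤ : ℕ∞) v)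
    (hbc : ∀ θ : ℝ, v (Real.cos θ, Real.sin θ) =
      (Real.cos ((n : ℝ) * θ), Real.sin ((n : ℝ) * θ))) :
    (∫ y in {y : ℝ × ℝ | y.1 ^ 2 + y.2 ^ 2 < 1},
        ((fderiv ℝ v y (1, 0)).1 * (fderiv ℝ v y (0, 1)).2 -
          (fderiv ℝ v y (1, 0)).2 * (fderiv ℝ v y (0, 1)).1))
      = (n : ℝ) * Real.pi := by
  classical
  set D : Set (ℝ × ℝ) := {y : ℝ × ℝ | y.1 ^ 2 + y.2 ^ 2 < 1} with hD
  have hDopen : IsOpen D := isOpen_lt (by fun_prop) continuous_const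
  have hDmeas : MeasurableSet D := hDopen.measurableSet
  show (∫ y in D, IntJacAux.J v y) = (n : ℝ) * Real.pi
  -- Step 1: divergence theorem on the rectangle
  have hle : ((0 : ℝ), -π) ≤ ((1 : ℝ), π) :=
    Prod.mk_le_mk.mpr ⟨by norm_num, by linarith [Real.pi_pos]⟩
  have hF := IntJacAux.hF hv
  have hG := IntJacAux.hG hv
  have hcd : ContDiff ℝ (⊤ : ℕ∞) (fun x : ℝ × ℝ =>
      fderiv ℝ (IntJacAux.F v) x (1, 0) + fderiv ℝ (IntJacAux.G v) x (0, 1)) :=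
    ((hF.fderiv_right (by simp)).clm_apply contDiff_const).add
      ((hG.fderiv_right (by simp)).clm_apply contDiff_const)
  have hcont : Continuous (fun x : ℝ × ℝ =>
      fderiv ℝ (IntJacAux.F v) x (1, 0) + fderiv ℝ (IntJacAux.G v) x (0, 1)) :=
    hcd.continuous
  have hdiv := integral_divergence_prod_Icc_of_hasFDerivAt_off_countable_of_le
    (IntJacAux.F v) (IntJacAux.G v)
    (fun p => fderiv ℝ (IntJacAux.F v) p) (fun p => fderiv ℝ (IntJacAux.G v) p)
    ((0 : ℝ), -π) ((1 : ℝ), π) hle ∅ countable_empty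
    hF.continuous.continuousOn hG.continuous.continuousOn
    (fun x _ => (hF.differentiable (by simp) x).hasFDerivAt)
    (fun x _ => (hG.differentiable (by simp) x).hasFDerivAt)
    (hcont.continuousOn.integrableOn_compact isCompact_Icc)
  -- Step 2: compute the boundary terms
  have h1 : (∫ x in (0:ℝ)..1, IntJacAux.G v (x, π)) =
      ∫ x in (0:ℝ)..1, IntJacAux.G v (x, -π) :=
    intervalIntegral.integral_congr fun x _ => IntJacAux.G_pi hv x
  have h2 : (∫ y in (-π)..π, IntJacAux.F v (1, y)) = (n : ℝ) * π := by
    rw [intervalIntegral.integral_congr (g := fun _ => (n : ℝ) / 2)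
      (fun y _ => IntJacAux.F_one hv hbc y), intervalIntegral.integral_const]
    simp; ring
  have h3 : (∫ y in (-π)..π, IntJacAux.F v (0, y)) = 0 := by
    rw [intervalIntegral.integral_congr (g := fun _ => (0:ℝ))
      (fun y _ => IntJacAux.F_zero hv y)]
    simp
  rw [h1, h2, h3] at hdiv
  -- hdiv : ∫ x in Icc .., f' + g' = n π (after simplification)
  have hdiv' : (∫ x in Icc ((0:ℝ), -π) ((1:ℝ), π),
      (fderiv ℝ (IntJacAux.F v) x (1, 0) + fderiv ℝ (IntJacAux.G v) x (0, 1)))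
      = (n : ℝ) * π := by rw [hdiv]; ring
  -- Step 3: pointwise identity
  have hpt : ∀ p : ℝ × ℝ,
      fderiv ℝ (IntJacAux.F v) p (1, 0) + fderiv ℝ (IntJacAux.G v) p (0, 1)
        = p.1 * IntJacAux.J v (p.1 * Real.cos p.2, p.1 * Real.sin p.2) :=
    fun p => (IntJacAux.divergence_eq hv p).trans (IntJacAux.cross_eq hv p)
  -- Step 4: polar change of variables
  have hpolar := integral_comp_polarCoord_symm (Set.indicator D (IntJacAux.J v))
  rw [integral_indicator hDmeas] at hpolar
  have hind : (fun p : ℝ × ℝ => p.1 • Set.indicator D (IntJacAux.J v) (polarCoord.symm p))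
      = Set.indicator (polarCoord.symm ⁻¹' D)
          (fun p : ℝ × ℝ => p.1 • IntJacAux.J v (polarCoord.symm p)) := by
    funext p
    by_cases h : polarCoord.symm p ∈ D
    · rw [Set.indicator_of_mem h, Set.indicator_of_mem (by exact h)]
    · rw [Set.indicator_of_notMem h, Set.indicator_of_notMem (by exact h), smul_zero]
  have hψ : Continuous (fun p : ℝ × ℝ => polarCoord.symm p) := by
    simp only [polarCoord_symm_apply]
    fun_prop
  rw [hind, setIntegral_indicator (hDopen.preimage hψ).measurableSet] at hpolar
  have hseteq : polarCoord.target ∩ (polarCoord.symm ⁻¹' D)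
      = Ioo (0:ℝ) 1 ×ˢ Ioo (-π) π := by
    ext p
    have h1 := Real.sin_sq_add_cos_sq p.2
    simp only [polarCoord_target, mem_inter_iff, mem_preimage, polarCoord_symm_apply, hD,
      mem_setOf_eq, mem_prod, mem_Ioi, mem_Ioo]
    have h2 : (p.1 * cos p.2) ^ 2 + (p.1 * sin p.2) ^ 2 = p.1 ^ 2 := by
      linear_combination p.1 ^ 2 * h1
    rw [h2]
    constructor
    · rintro ⟨⟨hr, hθ⟩, hd⟩
      exact ⟨⟨hr, by nlinarith⟩, hθ⟩
    · rintro ⟨⟨hr0, hr1⟩, hθ⟩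
      exact ⟨⟨hr0, hθ⟩, by nlinarith⟩
  rw [hseteq] at hpolar
  -- replace Ioo × Ioo by Icc
  have haeq : (Ioo (0:ℝ) 1 ×ˢ Ioo (-π) π : Set (ℝ × ℝ))
      =ᵐ[volume] Icc ((0:ℝ), -π) ((1:ℝ), π) := by
    rw [Icc_prod_eq]
    refine (MeasureTheory.ae_eq_set).2 ⟨?_, ?_⟩
    · rw [Set.diff_eq_empty.mpr (Set.prod_mono Ioo_subset_Icc_self Ioo_subset_Icc_self)]
      exact measure_empty
    · refine measure_mono_null (t := (({0, 1} : Set ℝ) ×ˢ (univ : Set ℝ))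
        ∪ ((univ : Set ℝ) ×ˢ ({-π, π} : Set ℝ))) ?_ ?_
      · rintro x ⟨⟨⟨ha1, ha2⟩, hb1, hb2⟩, hnot⟩
        simp only [mem_prod, mem_Ioo, not_and_or, not_and, not_lt] at hnot
        simp only [mem_union, mem_prod, mem_insert_iff, mem_singleton_iff, mem_univ, and_true,
          true_and]
        rcases hnot with h | h
        · rcases h with h | h
          · exact Or.inl (Or.inl (le_antisymm h ha1))
          · exact Or.inl (Or.inr (le_antisymm ha2 h))
        · rcases h with h | h
          · exact Or.inr (Or.inl (le_antisymm h hb1))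
          · exact Or.inr (Or.inr (le_antisymm hb2 h))
      · refine measure_union_null ?_ ?_
        · rw [show (volume : Measure (ℝ × ℝ)) = (volume : Measure ℝ).prod volume from rfl,
            Measure.prod_prod,
            Set.Finite.measure_zero (Set.toFinite _) volume, zero_mul]
        · rw [show (volume : Measure (ℝ × ℝ)) = (volume : Measure ℝ).prod volume from rfl,
            Measure.prod_prod,
            Set.Finite.measure_zero (Set.toFinite ({-π, π} : Set ℝ)) volume, mul_zero]
  rw [setIntegral_congr_set haeq] at hpolar
  -- chain everything
  rw [← hpolar, ← hdiv']
  refine setIntegral_congr_fun measurableSet_Icc fun p _ => ?_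
  rw [hpt p, smul_eq_mul, polarCoord_symm_apply]
end IntJacAux
end

section
/- (Pohozaev identity) Let v be a smooth solution on D̄ of Δv + v(1-|v|²)/ε² = ω₀(kv + (1/m)(y⊥·∇)v⊥) with v = g_n on ∂D. Then (1/2)∫_{∂D}|∂v/∂ν|² - πn² + ∫_D (1-|v|²)²/(2ε²) = ω₀ k (π - ∫_D |v|² dy) - (ω₀/m)∫_D |y|² (Jv) dy. -/
open MeasureTheory Real

/-- Jacobian determinant of a map `v : ℝ² → ℝ²`. -/
noncomputable def Jac (v : ℝ × ℝ → ℝ × ℝ) (y : ℝ × ℝ) : ℝ :=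
  (fderiv ℝ v y (1, 0)).1 * (fderiv ℝ v y (0, 1)).2 -
    (fderiv ℝ v y (1, 0)).2 * (fderiv ℝ v y (0, 1)).1

section AuxPohozaev
open Set

theorem contDiff_pd1 {f : ℝ × ℝ → ℝ} (hf : ContDiff ℝ (⊤ : ℕ∞) f) : ContDiff ℝ (⊤ : ℕ∞) (pd1 f) :=
  (hf.fderiv_right ((by simp))).clm_apply contDiff_const
theorem contDiff_pd2 {f : ℝ × ℝ → ℝ} (hf : ContDiff ℝ (⊤ : ℕ∞) f) : ContDiff ℝ (⊤ : ℕ∞) (pd2 f) :=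
  (hf.fderiv_right ((by simp))).clm_apply contDiff_const

section pdcalc
variable {f g : ℝ × ℝ → ℝ} {y : ℝ × ℝ} {c : ℝ}

theorem pd1_add (hf : DifferentiableAt ℝ f y) (hg : DifferentiableAt ℝ g y) :
    pd1 (fun z => f z + g z) y = pd1 f y + pd1 g y := by
  unfold pd1; rw [show (fun z => f z + g z) = f + g from rfl, (hf.hasFDerivAt.add hg.hasFDerivAt).fderiv]; rfl

theorem pd2_add (hf : DifferentiableAt ℝ f y) (hg : DifferentiableAt ℝ g y) :
    pd2 (fun z => f z + g z) y = pd2 f y + pd2 g y := by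
  unfold pd2; rw [show (fun z => f z + g z) = f + g from rfl, (hf.hasFDerivAt.add hg.hasFDerivAt).fderiv]; rfl

theorem pd1_sub (hf : DifferentiableAt ℝ f y) (hg : DifferentiableAt ℝ g y) :
    pd1 (fun z => f z - g z) y = pd1 f y - pd1 g y := by
  unfold pd1; rw [show (fun z => f z - g z) = f - g from rfl, (hf.hasFDerivAt.sub hg.hasFDerivAt).fderiv]; rfl

theorem pd2_sub (hf : DifferentiableAt ℝ f y) (hg : DifferentiableAt ℝ g y) :
    pd2 (fun z => f z - g z) y = pd2 f y - pd2 g y := by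
  unfold pd2; rw [show (fun z => f z - g z) = f - g from rfl, (hf.hasFDerivAt.sub hg.hasFDerivAt).fderiv]; rfl

theorem pd1_mul (hf : DifferentiableAt ℝ f y) (hg : DifferentiableAt ℝ g y) :
    pd1 (fun z => f z * g z) y = pd1 f y * g y + f y * pd1 g y := by
  unfold pd1; rw [show (fun z => f z * g z) = f * g from rfl, (hf.hasFDerivAt.mul hg.hasFDerivAt).fderiv, ContinuousLinearMap.add_apply,
    ContinuousLinearMap.smul_apply, ContinuousLinearMap.smul_apply, smul_eq_mul, smul_eq_mul]; ring

theorem pd2_mul (hf : DifferentiableAt ℝ f y) (hg : DifferentiableAt ℝ g y) :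
    pd2 (fun z => f z * g z) y = pd2 f y * g y + f y * pd2 g y := by
  unfold pd2; rw [show (fun z => f z * g z) = f * g from rfl, (hf.hasFDerivAt.mul hg.hasFDerivAt).fderiv, ContinuousLinearMap.add_apply,
    ContinuousLinearMap.smul_apply, ContinuousLinearMap.smul_apply, smul_eq_mul, smul_eq_mul]; ring

theorem pd1_neg : pd1 (fun z => -(f z)) y = -pd1 f y := by
  simp [pd1, fderiv_neg]

theorem pd2_neg : pd2 (fun z => -(f z)) y = -pd2 f y := by
  simp [pd2, fderiv_neg]

theorem pd1_const : pd1 (fun _ => c) y = 0 := by simp [pd1]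
theorem pd2_const : pd2 (fun _ => c) y = 0 := by simp [pd2]

theorem pd1_fst : pd1 (fun z => z.1) y = 1 := by
  simp [pd1, fderiv_fst]
theorem pd2_fst : pd2 (fun z => z.1) y = 0 := by
  simp [pd2, fderiv_fst]
theorem pd1_snd : pd1 (fun z => z.2) y = 0 := by
  simp [pd1, fderiv_snd]
theorem pd2_snd : pd2 (fun z => z.2) y = 1 := by
  simp [pd2, fderiv_snd]

end pdcalc

-- Clairaut
theorem pd_comm {f : ℝ × ℝ → ℝ} (hf : ContDiff ℝ (⊤ : ℕ∞) f) (y : ℝ × ℝ) :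
    pd2 (pd1 f) y = pd1 (pd2 f) y := by
  have hd : Differentiable ℝ (fderiv ℝ f) :=
    (hf.fderiv_right ((by simp)) : ContDiff ℝ (⊤ : ℕ∞) _).differentiable (by simp)
  have h1 : pd2 (pd1 f) y = fderiv ℝ (fderiv ℝ f) y (0, 1) (1, 0) := by
    unfold pd1 pd2
    rw [fderiv_clm_apply (hd y) (differentiableAt_const _)]
    simp
  have h2 : pd1 (pd2 f) y = fderiv ℝ (fderiv ℝ f) y (1, 0) (0, 1) := by
    unfold pd1 pd2
    rw [fderiv_clm_apply (hd y) (differentiableAt_const _)]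
    simp
  rw [h1, h2]
  exact ((hf.contDiffAt).isSymmSndFDerivAt (by rw [minSmoothness_of_isRCLikeNormedField]; exact WithTop.coe_le_coe.mpr le_top)).eq _ _

-- components of fderiv of vector function
theorem fderiv_comp_fst {v : ℝ × ℝ → ℝ × ℝ} (hv : ContDiff ℝ (⊤ : ℕ∞) v) (y z : ℝ × ℝ) :
    (fderiv ℝ v y z).1 = fderiv ℝ (fun s => (v s).1) y z := by
  have : fderiv ℝ (fun s => (v s).1) y =
      (ContinuousLinearMap.fst ℝ ℝ ℝ).comp (fderiv ℝ v y) :=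
    ((ContinuousLinearMap.fst ℝ ℝ ℝ).hasFDerivAt.comp y
      (hv.differentiable (by simp) y).hasFDerivAt).fderiv
  rw [this]; rfl

theorem fderiv_comp_snd {v : ℝ × ℝ → ℝ × ℝ} (hv : ContDiff ℝ (⊤ : ℕ∞) v) (y z : ℝ × ℝ) :
    (fderiv ℝ v y z).2 = fderiv ℝ (fun s => (v s).2) y z := by
  have : fderiv ℝ (fun s => (v s).2) y =
      (ContinuousLinearMap.snd ℝ ℝ ℝ).comp (fderiv ℝ v y) :=
    ((ContinuousLinearMap.snd ℝ ℝ ℝ).hasFDerivAt.comp y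
      (hv.differentiable (by simp) y).hasFDerivAt).fderiv
  rw [this]; rfl


theorem fderiv_pd (f : ℝ × ℝ → ℝ) (y : ℝ × ℝ) (a b : ℝ) :
    fderiv ℝ f y (a, b) = a * pd1 f y + b * pd2 f y := by
  have h : (a, b) = a • ((1:ℝ), (0:ℝ)) + b • ((0:ℝ), (1:ℝ)) := by simp
  rw [h, map_add, (fderiv ℝ f y).map_smul, (fderiv ℝ f y).map_smul]
  simp [pd1, pd2]

theorem integrableOn_rect {f : ℝ × ℝ → ℝ} (hf : Continuous f) :
    IntegrableOn f (Ioo (0:ℝ) 1 ×ˢ Ioo (-π) π) := by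
  have h : IntegrableOn f (Icc (0:ℝ) 1 ×ˢ Icc (-π) π) :=
    hf.continuousOn.integrableOn_compact ((isCompact_Icc).prod isCompact_Icc)
  exact h.mono_set (Set.prod_mono Ioo_subset_Icc_self Ioo_subset_Icc_self)

theorem integrableOn_disc {f : ℝ × ℝ → ℝ} (hf : Continuous f) :
    IntegrableOn f {y : ℝ × ℝ | y.1 ^ 2 + y.2 ^ 2 < 1} := by
  have h : IntegrableOn f (Icc ((-1 : ℝ), (-1 : ℝ)) (1, 1)) :=
    hf.continuousOn.integrableOn_compact isCompact_Icc
  refine h.mono_set ?_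
  rintro ⟨a, b⟩ hy
  simp only [Set.mem_setOf_eq] at hy
  constructor
  · constructor <;> [skip; skip] <;> simp <;> nlinarith
  · constructor <;> simp <;> nlinarith

/-- Divergence theorem on the unit disc. -/
theorem div_thm (F1 F2 : ℝ × ℝ → ℝ) (hF1 : ContDiff ℝ (⊤ : ℕ∞) F1) (hF2 : ContDiff ℝ (⊤ : ℕ∞) F2) :
    ∫ y in {y : ℝ × ℝ | y.1 ^ 2 + y.2 ^ 2 < 1}, (pd1 F1 y + pd2 F2 y)
    = ∫ θ in (0:ℝ)..(2 * π),
        (F1 (cos θ, sin θ) * cos θ + F2 (cos θ, sin θ) * sin θ) := by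
  have hdF1 : Differentiable ℝ F1 := hF1.differentiable (by simp)
  have hdF2 : Differentiable ℝ F2 := hF2.differentiable (by simp)
  have hcF1 : Continuous F1 := hF1.continuous
  have hcF2 : Continuous F2 := hF2.continuous
  have hc1 : Continuous (pd1 F1) := (contDiff_pd1 hF1).continuous
  have hc2 : Continuous (pd2 F1) := (contDiff_pd2 hF1).continuous
  have hc3 : Continuous (pd1 F2) := (contDiff_pd1 hF2).continuous
  have hc4 : Continuous (pd2 F2) := (contDiff_pd2 hF2).continuous
  set g : ℝ × ℝ → ℝ := fun y => pd1 F1 y + pd2 F2 y with hgdef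
  have hgc : Continuous g := hc1.add hc4
  set D : Set (ℝ × ℝ) := {y : ℝ × ℝ | y.1 ^ 2 + y.2 ^ 2 < 1} with hDdef
  have hDopen : IsOpen D := isOpen_lt (by fun_prop) continuous_const
  have hDmeas : MeasurableSet D := hDopen.measurableSet
  set E : Set (ℝ × ℝ) := Ioo (0:ℝ) 1 ×ˢ Ioo (-π) π with hEdef
  have hEmeas : MeasurableSet E := (measurableSet_Ioo).prod measurableSet_Ioo
  set A : ℝ × ℝ → ℝ := fun p =>
    (F1 (p.1 * cos p.2, p.1 * sin p.2) * cos p.2 + F2 (p.1 * cos p.2, p.1 * sin p.2) * sin p.2)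
    + p.1 * ((pd1 F1 (p.1 * cos p.2, p.1 * sin p.2) * cos p.2
              + pd2 F1 (p.1 * cos p.2, p.1 * sin p.2) * sin p.2) * cos p.2
           + (pd1 F2 (p.1 * cos p.2, p.1 * sin p.2) * cos p.2
              + pd2 F2 (p.1 * cos p.2, p.1 * sin p.2) * sin p.2) * sin p.2) with hAdef
  set B : ℝ × ℝ → ℝ := fun p =>
    (-((pd1 F1 (p.1 * cos p.2, p.1 * sin p.2) * (-(p.1 * sin p.2))
        + pd2 F1 (p.1 * cos p.2, p.1 * sin p.2) * (p.1 * cos p.2)) * sin p.2)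
      - F1 (p.1 * cos p.2, p.1 * sin p.2) * cos p.2)
    + ((pd1 F2 (p.1 * cos p.2, p.1 * sin p.2) * (-(p.1 * sin p.2))
        + pd2 F2 (p.1 * cos p.2, p.1 * sin p.2) * (p.1 * cos p.2)) * cos p.2
      - F2 (p.1 * cos p.2, p.1 * sin p.2) * sin p.2) with hBdef
  have hAcont : Continuous A := by rw [hAdef]; fun_prop
  have hBcont : Continuous B := by rw [hBdef]; fun_prop
  have hAint : IntegrableOn A E := integrableOn_rect hAcont
  have hBint : IntegrableOn B E := integrableOn_rect hBcont
  -- Step 1 : polar change of variables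
  have step1 : ∫ y in D, g y = ∫ p in E, p.1 * g (p.1 * cos p.2, p.1 * sin p.2) := by
    have h0 := integral_comp_polarCoord_symm (D.indicator g)
    rw [integral_indicator hDmeas] at h0
    rw [← h0]
    have heq : ∀ p ∈ polarCoord.target,
        p.1 • (D.indicator g) (polarCoord.symm p)
        = E.indicator (fun p => p.1 * g (p.1 * cos p.2, p.1 * sin p.2)) p := by
      rintro ⟨r, θ⟩ ⟨hr, hθ⟩
      simp only [Set.mem_Ioi] at hr
      have hsymm : polarCoord.symm (r, θ) = (r * cos θ, r * sin θ) := rfl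
      rw [hsymm]
      by_cases h : r < 1
      · have hD : ((r * cos θ, r * sin θ) : ℝ × ℝ) ∈ D := by
          simp only [hDdef, Set.mem_setOf_eq]
          have : (r * cos θ) ^ 2 + (r * sin θ) ^ 2 = r ^ 2 := by
            have := sin_sq_add_cos_sq θ; nlinarith
          rw [this]; nlinarith
        have hE : ((r, θ) : ℝ × ℝ) ∈ E := by
          constructor
          · exact ⟨hr, h⟩
          · exact hθ
        rw [Set.indicator_of_mem hD, Set.indicator_of_mem hE]
        simp [smul_eq_mul]
      · push_neg at h
        have hD : ((r * cos θ, r * sin θ) : ℝ × ℝ) ∉ D := by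
          simp only [hDdef, Set.mem_setOf_eq, not_lt]
          have : (r * cos θ) ^ 2 + (r * sin θ) ^ 2 = r ^ 2 := by
            have := sin_sq_add_cos_sq θ; nlinarith
          rw [this]; nlinarith
        have hE : ((r, θ) : ℝ × ℝ) ∉ E := by
          intro hmem
          exact absurd hmem.1.2 (not_lt.mpr h)
        rw [Set.indicator_of_notMem hD, Set.indicator_of_notMem hE]
        simp
    rw [setIntegral_congr_fun (polarCoord.open_target.measurableSet) heq,
      setIntegral_indicator hEmeas]
    congr 1
    rw [hEdef]
    rw [Set.inter_eq_self_of_subset_right]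
    intro p hp
    exact ⟨Set.mem_Ioi.mpr hp.1.1, hp.2⟩
  -- derivative in the radial direction
  have hPder : ∀ (θ r : ℝ), HasDerivAt
      (fun r => r * (F1 (r * cos θ, r * sin θ) * cos θ + F2 (r * cos θ, r * sin θ) * sin θ))
      (A (r, θ)) r := by
    intro θ r
    have hline : HasDerivAt (fun r : ℝ => (r * cos θ, r * sin θ)) (cos θ, sin θ) r := by
      simpa using ((hasDerivAt_id r).mul_const (cos θ)).prodMk ((hasDerivAt_id r).mul_const (sin θ))
    have h1 : HasDerivAt (fun r : ℝ => F1 (r * cos θ, r * sin θ))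
        (fderiv ℝ F1 (r * cos θ, r * sin θ) (cos θ, sin θ)) r :=
      (hdF1 _).hasFDerivAt.comp_hasDerivAt r hline
    have h2 : HasDerivAt (fun r : ℝ => F2 (r * cos θ, r * sin θ))
        (fderiv ℝ F2 (r * cos θ, r * sin θ) (cos θ, sin θ)) r :=
      (hdF2 _).hasFDerivAt.comp_hasDerivAt r hline
    have h3 := (hasDerivAt_id r).mul ((h1.mul_const (cos θ)).add (h2.mul_const (sin θ)))
    refine h3.congr_deriv ?_
    simp only [hAdef, fderiv_pd, id_eq, Pi.add_apply]
    ring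
  -- derivative in the angular direction
  have hQder : ∀ (r θ : ℝ), HasDerivAt
      (fun θ => -(F1 (r * cos θ, r * sin θ) * sin θ) + F2 (r * cos θ, r * sin θ) * cos θ)
      (B (r, θ)) θ := by
    intro r θ
    have hline : HasDerivAt (fun θ : ℝ => (r * cos θ, r * sin θ))
        (r * (-sin θ), r * cos θ) θ :=
      ((Real.hasDerivAt_cos θ).const_mul r).prodMk ((Real.hasDerivAt_sin θ).const_mul r)
    have h1 : HasDerivAt (fun θ : ℝ => F1 (r * cos θ, r * sin θ))
        (fderiv ℝ F1 (r * cos θ, r * sin θ) (r * (-sin θ), r * cos θ)) θ :=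
      (hdF1 _).hasFDerivAt.comp_hasDerivAt θ hline
    have h2 : HasDerivAt (fun θ : ℝ => F2 (r * cos θ, r * sin θ))
        (fderiv ℝ F2 (r * cos θ, r * sin θ) (r * (-sin θ), r * cos θ)) θ :=
      (hdF2 _).hasFDerivAt.comp_hasDerivAt θ hline
    have h3 := ((h1.mul (Real.hasDerivAt_sin θ)).neg).add (h2.mul (Real.hasDerivAt_cos θ))
    refine h3.congr_deriv ?_
    simp only [hBdef, fderiv_pd]
    ring
  -- pointwise polar identity
  have key : ∀ p : ℝ × ℝ, p.1 * g (p.1 * cos p.2, p.1 * sin p.2) = A p + B p := by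
    intro p
    have hcs := sin_sq_add_cos_sq p.2
    simp only [hAdef, hBdef, hgdef]
    linear_combination (-(p.1 * (pd1 F1 (p.1 * cos p.2, p.1 * sin p.2)
      + pd2 F2 (p.1 * cos p.2, p.1 * sin p.2)))) * hcs
  have hsplit : (∫ p in E, p.1 * g (p.1 * cos p.2, p.1 * sin p.2))
      = (∫ p in E, A p) + ∫ p in E, B p := by
    rw [show (fun p : ℝ × ℝ => p.1 * g (p.1 * cos p.2, p.1 * sin p.2))
        = fun p => A p + B p from funext key]
    exact integral_add hAint hBint
  -- the angular part vanishes
  have hBzero : (∫ p in E, B p) = 0 := by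
    have hfub : ∫ p in E, B p = ∫ r in Ioo (0:ℝ) 1, ∫ θ in Ioo (-π) π, B (r, θ) := by
      rw [hEdef, Measure.volume_eq_prod ℝ ℝ]
      refine setIntegral_prod B ?_
      rw [← Measure.volume_eq_prod ℝ ℝ]
      exact hBint
    rw [hfub]
    have hinner : ∀ r : ℝ, (∫ θ in Ioo (-π) π, B (r, θ)) = 0 := by
      intro r
      rw [← integral_Ioc_eq_integral_Ioo,
        ← intervalIntegral.integral_of_le (by linarith [pi_pos] : -π ≤ π)]
      rw [intervalIntegral.integral_eq_sub_of_hasDerivAt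
        (fun θ _ => hQder r θ) ((hBcont.comp (by fun_prop)).intervalIntegrable _ _)]
      simp
    simp [hinner]
  -- the radial part gives the boundary integral
  have hApart : (∫ p in E, A p)
      = ∫ θ in Ioo (-π) π, (F1 (cos θ, sin θ) * cos θ + F2 (cos θ, sin θ) * sin θ) := by
    have hfub : ∫ p in E, A p
        = ∫ θ in Ioo (-π) π, ∫ r in Ioo (0:ℝ) 1, A (r, θ) := by
      rw [hEdef, Measure.volume_eq_prod ℝ ℝ, ← Measure.prod_restrict]
      refine integral_prod_symm A ?_
      rw [Measure.prod_restrict, ← Measure.volume_eq_prod ℝ ℝ]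
      exact hAint
    rw [hfub]
    refine setIntegral_congr_fun measurableSet_Ioo (fun θ _ => ?_)
    rw [← integral_Ioc_eq_integral_Ioo,
      ← intervalIntegral.integral_of_le (by norm_num : (0:ℝ) ≤ 1)]
    rw [intervalIntegral.integral_eq_sub_of_hasDerivAt
      (fun r _ => hPder θ r) ((hAcont.comp (by fun_prop)).intervalIntegrable _ _)]
    norm_num
  -- periodicity: move the interval
  have hper : (∫ θ in Ioo (-π) π, (F1 (cos θ, sin θ) * cos θ + F2 (cos θ, sin θ) * sin θ))
      = ∫ θ in (0:ℝ)..(2 * π),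
          (F1 (cos θ, sin θ) * cos θ + F2 (cos θ, sin θ) * sin θ) := by
    have hp : Function.Periodic
        (fun θ => F1 (cos θ, sin θ) * cos θ + F2 (cos θ, sin θ) * sin θ) (2 * π) := by
      intro θ; simp [Real.cos_add_two_pi, Real.sin_add_two_pi]
    have h2 := hp.intervalIntegral_add_eq (-π) 0
    rw [show -π + 2 * π = π by ring, zero_add] at h2
    rw [← integral_Ioc_eq_integral_Ioo,
      ← intervalIntegral.integral_of_le (by linarith [pi_pos] : -π ≤ π), h2]
  rw [step1, hsplit, hBzero, hApart, hper, add_zero]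

end AuxPohozaev

/-- Pohozaev identity for smooth solutions of
`Δv + v(1-|v|²)/ε² = ω₀(kv + (1/m)(y⊥·∇)v⊥)` with boundary value `g_n`, `n = km`. -/
theorem pohozaev_identity (ε ω₀ : ℝ) (hε : 0 < ε) (k m : ℤ) (hk : k ≠ 0) (hm : m ≠ 0)
    (v : ℝ × ℝ → ℝ × ℝ) (hv : ContDiff ℝ (⊤ : ℕ∞) v)
    (hbc : ∀ θ : ℝ, v (Real.cos θ, Real.sin θ) =
      (Real.cos (((k * m : ℤ) : ℝ) * θ), Real.sin (((k * m : ℤ) : ℝ) * θ)))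
    (hpde1 : ∀ y : ℝ × ℝ, y.1 ^ 2 + y.2 ^ 2 < 1 →
      lap (fun z => (v z).1) y + (v y).1 * (1 - ((v y).1 ^ 2 + (v y).2 ^ 2)) / ε ^ 2 =
        ω₀ * ((k : ℝ) * (v y).1 + (1 / (m : ℝ)) *
          (-(y.2) * pd1 (fun z => -(v z).2) y + y.1 * pd2 (fun z => -(v z).2) y)))
    (hpde2 : ∀ y : ℝ × ℝ, y.1 ^ 2 + y.2 ^ 2 < 1 →
      lap (fun z => (v z).2) y + (v y).2 * (1 - ((v y).1 ^ 2 + (v y).2 ^ 2)) / ε ^ 2 =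
        ω₀ * ((k : ℝ) * (v y).2 + (1 / (m : ℝ)) *
          (-(y.2) * pd1 (fun z => (v z).1) y + y.1 * pd2 (fun z => (v z).1) y))) :
    (1 / 2) * (∫ θ : ℝ in (0)..(2 * Real.pi),
        ((fderiv ℝ v (Real.cos θ, Real.sin θ) (Real.cos θ, Real.sin θ)).1 ^ 2 +
          (fderiv ℝ v (Real.cos θ, Real.sin θ) (Real.cos θ, Real.sin θ)).2 ^ 2))
      - Real.pi * ((k * m : ℤ) : ℝ) ^ 2
      + (∫ y in {y : ℝ × ℝ | y.1 ^ 2 + y.2 ^ 2 < 1},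
          (1 - ((v y).1 ^ 2 + (v y).2 ^ 2)) ^ 2 / (2 * ε ^ 2))
    = ω₀ * (k : ℝ) * (Real.pi -
        ∫ y in {y : ℝ × ℝ | y.1 ^ 2 + y.2 ^ 2 < 1}, ((v y).1 ^ 2 + (v y).2 ^ 2))
      - (ω₀ / (m : ℝ)) *
        ∫ y in {y : ℝ × ℝ | y.1 ^ 2 + y.2 ^ 2 < 1}, (y.1 ^ 2 + y.2 ^ 2) * Jac v y := by
  have hπ := Real.pi_pos
  set n : ℝ := ((k * m : ℤ) : ℝ) with hn
  have hU : ContDiff ℝ (⊤ : ℕ∞) (fun z => (v z).1) := contDiff_fst.comp hv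
  have hW : ContDiff ℝ (⊤ : ℕ∞) (fun z => (v z).2) := contDiff_snd.comp hv
  have hdv : Differentiable ℝ v := hv.differentiable (by simp)
  have hdU : Differentiable ℝ (fun z => (v z).1) := hU.differentiable (by simp)
  have hdW : Differentiable ℝ (fun z => (v z).2) := hW.differentiable (by simp)
  have hcdU1 : ContDiff ℝ (⊤ : ℕ∞) (pd1 (fun z => (v z).1)) := contDiff_pd1 hU
  have hcdU2 : ContDiff ℝ (⊤ : ℕ∞) (pd2 (fun z => (v z).1)) := contDiff_pd2 hU
  have hcdW1 : ContDiff ℝ (⊤ : ℕ∞) (pd1 (fun z => (v z).2)) := contDiff_pd1 hW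
  have hcdW2 : ContDiff ℝ (⊤ : ℕ∞) (pd2 (fun z => (v z).2)) := contDiff_pd2 hW
  have hdU1 : Differentiable ℝ (pd1 (fun z => (v z).1)) := hcdU1.differentiable (by simp)
  have hdU2 : Differentiable ℝ (pd2 (fun z => (v z).1)) := hcdU2.differentiable (by simp)
  have hdW1 : Differentiable ℝ (pd1 (fun z => (v z).2)) := hcdW1.differentiable (by simp)
  have hdW2 : Differentiable ℝ (pd2 (fun z => (v z).2)) := hcdW2.differentiable (by simp)
  have hcU : Continuous (fun z => (v z).1) := hU.continuous
  have hcW : Continuous (fun z => (v z).2) := hW.continuous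
  have hc1 : Continuous (pd1 (fun z => (v z).1)) := hcdU1.continuous
  have hc2 : Continuous (pd2 (fun z => (v z).1)) := hcdU2.continuous
  have hc3 : Continuous (pd1 (fun z => (v z).2)) := hcdW1.continuous
  have hc4 : Continuous (pd2 (fun z => (v z).2)) := hcdW2.continuous
  have hfd : ContDiff ℝ (⊤ : ℕ∞) (fun y => fderiv ℝ v y) := hv.fderiv_right (by simp)
  have hJc : Continuous (Jac v) := by
    have hfd1 : ContDiff ℝ (⊤ : ℕ∞) (fun y => fderiv ℝ v y ((1:ℝ), (0:ℝ))) :=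
      hfd.clm_apply contDiff_const
    have hfd2 : ContDiff ℝ (⊤ : ℕ∞) (fun y => fderiv ℝ v y ((0:ℝ), (1:ℝ))) :=
      hfd.clm_apply contDiff_const
    have h1 := hfd1.continuous
    have h2 := hfd2.continuous
    unfold Jac
    fun_prop
  set D : Set (ℝ × ℝ) := {y : ℝ × ℝ | y.1 ^ 2 + y.2 ^ 2 < 1} with hDdef
  have hDopen : IsOpen D := isOpen_lt (by fun_prop) continuous_const
  have hDmeas : MeasurableSet D := hDopen.measurableSet
  have hJac : ∀ y : ℝ × ℝ, Jac v y =
      pd1 (fun s => (v s).1) y * pd2 (fun s => (v s).2) y -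
        pd1 (fun s => (v s).2) y * pd2 (fun s => (v s).1) y := by
    intro y
    unfold Jac pd1 pd2
    rw [fderiv_comp_fst hv, fderiv_comp_snd hv, fderiv_comp_fst hv, fderiv_comp_snd hv]
  -- the Pohozaev vector field
  set G1 : ℝ × ℝ → ℝ := fun z =>
    (z.1 * pd1 (fun s => (v s).1) z + z.2 * pd2 (fun s => (v s).1) z) * pd1 (fun s => (v s).1) z
    + (z.1 * pd1 (fun s => (v s).2) z + z.2 * pd2 (fun s => (v s).2) z) * pd1 (fun s => (v s).2) z
    - 1 / 2 * (z.1 * (pd1 (fun s => (v s).1) z * pd1 (fun s => (v s).1) z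
        + pd2 (fun s => (v s).1) z * pd2 (fun s => (v s).1) z
        + pd1 (fun s => (v s).2) z * pd1 (fun s => (v s).2) z
        + pd2 (fun s => (v s).2) z * pd2 (fun s => (v s).2) z))
    - 1 / (4 * ε ^ 2) * (z.1 * ((1 - ((v z).1 * (v z).1 + (v z).2 * (v z).2))
        * (1 - ((v z).1 * (v z).1 + (v z).2 * (v z).2))))
    - ω₀ * (k : ℝ) / 2 * (z.1 * ((v z).1 * (v z).1 + (v z).2 * (v z).2)) with hG1def
  set G2 : ℝ × ℝ → ℝ := fun z =>
    (z.1 * pd1 (fun s => (v s).1) z + z.2 * pd2 (fun s => (v s).1) z) * pd2 (fun s => (v s).1) z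
    + (z.1 * pd1 (fun s => (v s).2) z + z.2 * pd2 (fun s => (v s).2) z) * pd2 (fun s => (v s).2) z
    - 1 / 2 * (z.2 * (pd1 (fun s => (v s).1) z * pd1 (fun s => (v s).1) z
        + pd2 (fun s => (v s).1) z * pd2 (fun s => (v s).1) z
        + pd1 (fun s => (v s).2) z * pd1 (fun s => (v s).2) z
        + pd2 (fun s => (v s).2) z * pd2 (fun s => (v s).2) z))
    - 1 / (4 * ε ^ 2) * (z.2 * ((1 - ((v z).1 * (v z).1 + (v z).2 * (v z).2))
        * (1 - ((v z).1 * (v z).1 + (v z).2 * (v z).2))))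
    - ω₀ * (k : ℝ) / 2 * (z.2 * ((v z).1 * (v z).1 + (v z).2 * (v z).2)) with hG2def
  have hG1 : ContDiff ℝ (⊤ : ℕ∞) G1 := by rw [hG1def]; fun_prop
  have hG2 : ContDiff ℝ (⊤ : ℕ∞) G2 := by rw [hG2def]; fun_prop
  -- pointwise divergence identity on D
  have key : ∀ y ∈ D, pd1 G1 y + pd2 G2 y =
      -((1 - ((v y).1 ^ 2 + (v y).2 ^ 2)) ^ 2 / (2 * ε ^ 2))
      + -(ω₀ * (k : ℝ) * ((v y).1 ^ 2 + (v y).2 ^ 2))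
      + -(ω₀ / (m : ℝ) * ((y.1 ^ 2 + y.2 ^ 2) * Jac v y)) := by
    intro y hy
    have h1 := hpde1 y hy
    have h2 := hpde2 y hy
    unfold lap at h1 h2
    simp only [pd1_neg, pd2_neg] at h1
    rw [hJac y, hG1def, hG2def]
    simp (disch := fun_prop) only [pd1_add, pd1_sub, pd1_mul, pd2_add, pd2_sub, pd2_mul,
      pd1_fst, pd1_snd, pd2_fst, pd2_snd, pd1_const, pd2_const]
    rw [pd_comm hU y, pd_comm hW y]
    linear_combination (y.1 * pd1 (fun s => (v s).1) y + y.2 * pd2 (fun s => (v s).1) y) * h1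
      + (y.1 * pd1 (fun s => (v s).2) y + y.2 * pd2 (fun s => (v s).2) y) * h2
  -- boundary values and tangential derivatives
  have hval1 : ∀ θ : ℝ, (v (cos θ, sin θ)).1 = cos (n * θ) := fun θ => by rw [hbc θ]
  have hval2 : ∀ θ : ℝ, (v (cos θ, sin θ)).2 = sin (n * θ) := fun θ => by rw [hbc θ]
  have hline : ∀ θ : ℝ, HasDerivAt (fun t : ℝ => (cos t, sin t)) (-sin θ, cos θ) θ :=
    fun θ => (Real.hasDerivAt_cos θ).prodMk (Real.hasDerivAt_sin θ)
  have htangU : ∀ θ : ℝ,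
      -sin θ * pd1 (fun s => (v s).1) (cos θ, sin θ)
        + cos θ * pd2 (fun s => (v s).1) (cos θ, sin θ) = -(n * sin (n * θ)) := by
    intro θ
    have h1 : HasDerivAt (fun t : ℝ => (v (cos t, sin t)).1)
        (fderiv ℝ (fun s => (v s).1) (cos θ, sin θ) (-sin θ, cos θ)) θ :=
      (hdU _).hasFDerivAt.comp_hasDerivAt θ (hline θ)
    have heq : (fun t : ℝ => (v (cos t, sin t)).1) = fun t => cos (n * t) :=
      funext fun t => hval1 t
    rw [heq] at h1
    have h2 : HasDerivAt (fun t : ℝ => cos (n * t)) (-(n * sin (n * θ))) θ := by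
      have := (Real.hasDerivAt_cos (n * θ)).comp θ ((hasDerivAt_id θ).const_mul n)
      refine this.congr_deriv ?_
      ring
    have h3 := h1.unique h2
    rw [fderiv_pd] at h3
    exact h3
  have htangW : ∀ θ : ℝ,
      -sin θ * pd1 (fun s => (v s).2) (cos θ, sin θ)
        + cos θ * pd2 (fun s => (v s).2) (cos θ, sin θ) = n * cos (n * θ) := by
    intro θ
    have h1 : HasDerivAt (fun t : ℝ => (v (cos t, sin t)).2)
        (fderiv ℝ (fun s => (v s).2) (cos θ, sin θ) (-sin θ, cos θ)) θ :=
      (hdW _).hasFDerivAt.comp_hasDerivAt θ (hline θ)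
    have heq : (fun t : ℝ => (v (cos t, sin t)).2) = fun t => sin (n * t) :=
      funext fun t => hval2 t
    rw [heq] at h1
    have h2 : HasDerivAt (fun t : ℝ => sin (n * t)) (n * cos (n * θ)) θ := by
      have := (Real.hasDerivAt_sin (n * θ)).comp θ ((hasDerivAt_id θ).const_mul n)
      refine this.congr_deriv ?_
      ring
    have h3 := h1.unique h2
    rw [fderiv_pd] at h3
    exact h3
  -- boundary identity
  have hbnd : ∀ θ : ℝ, G1 (cos θ, sin θ) * cos θ + G2 (cos θ, sin θ) * sin θ
      = 1 / 2 * ((fderiv ℝ v (cos θ, sin θ) (cos θ, sin θ)).1 ^ 2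
          + (fderiv ℝ v (cos θ, sin θ) (cos θ, sin θ)).2 ^ 2) - n ^ 2 / 2 - ω₀ * (k : ℝ) / 2 := by
    intro θ
    have e1 := sin_sq_add_cos_sq θ
    have e2 := sin_sq_add_cos_sq (n * θ)
    have t1 := htangU θ
    have t2 := htangW θ
    rw [fderiv_comp_fst hv, fderiv_comp_snd hv, fderiv_pd, fderiv_pd]
    simp only [hG1def, hG2def]
    rw [hval1 θ, hval2 θ]
    linear_combination
      (-((1 - (cos (n*θ) * cos (n*θ) + sin (n*θ) * sin (n*θ)))
          * (1 - (cos (n*θ) * cos (n*θ) + sin (n*θ) * sin (n*θ))) / (4*ε^2)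
        + ω₀ * (k:ℝ) * (cos (n*θ) * cos (n*θ) + sin (n*θ) * sin (n*θ)) / 2)) * e1
      + (-((sin (n*θ)^2 + cos (n*θ)^2 - 1) / (4*ε^2)) - ω₀ * (k:ℝ) / 2 - n^2/2) * e2
      + (-(1/2) * ((-sin θ * pd1 (fun s => (v s).1) (cos θ, sin θ)
          + cos θ * pd2 (fun s => (v s).1) (cos θ, sin θ)) - sin (n*θ) * n)) * t1
      + (-(1/2) * ((-sin θ * pd1 (fun s => (v s).2) (cos θ, sin θ)
          + cos θ * pd2 (fun s => (v s).2) (cos θ, sin θ)) + cos (n*θ) * n)) * t2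
  -- integrability of the interior integrands
  have hI1int : IntegrableOn (fun y : ℝ × ℝ =>
      (1 - ((v y).1 ^ 2 + (v y).2 ^ 2)) ^ 2 / (2 * ε ^ 2)) D := integrableOn_disc (by fun_prop)
  have hI2int : IntegrableOn (fun y : ℝ × ℝ => ((v y).1 ^ 2 + (v y).2 ^ 2)) D :=
    integrableOn_disc (by fun_prop)
  have hI3int : IntegrableOn (fun y : ℝ × ℝ => (y.1 ^ 2 + y.2 ^ 2) * Jac v y) D :=
    integrableOn_disc (by fun_prop)
  have hdiv := div_thm G1 G2 hG1 hG2
  have hLHS : (∫ y in D, (pd1 G1 y + pd2 G2 y))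
      = -(∫ y in D, (1 - ((v y).1 ^ 2 + (v y).2 ^ 2)) ^ 2 / (2 * ε ^ 2))
        + -(ω₀ * (k : ℝ) * ∫ y in D, ((v y).1 ^ 2 + (v y).2 ^ 2))
        + -(ω₀ / (m : ℝ) * ∫ y in D, (y.1 ^ 2 + y.2 ^ 2) * Jac v y) := by
    rw [setIntegral_congr_fun hDmeas (fun y hy => key y hy)]
    have e2i : IntegrableOn (fun y : ℝ × ℝ =>
        -(ω₀ * (k : ℝ) * ((v y).1 ^ 2 + (v y).2 ^ 2))) D := ((hI2int.const_mul _).neg)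
    have e3i : IntegrableOn (fun y : ℝ × ℝ =>
        -(ω₀ / (m : ℝ) * ((y.1 ^ 2 + y.2 ^ 2) * Jac v y))) D := ((hI3int.const_mul _).neg)
    have e1i : IntegrableOn (fun y : ℝ × ℝ =>
        -((1 - ((v y).1 ^ 2 + (v y).2 ^ 2)) ^ 2 / (2 * ε ^ 2))) D := hI1int.neg
    have e12i : IntegrableOn (fun y : ℝ × ℝ =>
        -((1 - ((v y).1 ^ 2 + (v y).2 ^ 2)) ^ 2 / (2 * ε ^ 2))
        + -(ω₀ * (k : ℝ) * ((v y).1 ^ 2 + (v y).2 ^ 2))) D := e1i.add e2i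
    rw [integral_add e12i e3i, integral_add e1i e2i,
      integral_neg, integral_neg, integral_neg, integral_const_mul, integral_const_mul]
  have hΦc : Continuous (fun θ : ℝ => (fderiv ℝ v (cos θ, sin θ) (cos θ, sin θ)).1 ^ 2
      + (fderiv ℝ v (cos θ, sin θ) (cos θ, sin θ)).2 ^ 2) := by
    have hclm : Continuous (fun θ : ℝ => (fderiv ℝ v (cos θ, sin θ)) (cos θ, sin θ)) :=
      isBoundedBilinearMap_apply.continuous.comp
        ((hfd.continuous.comp (continuous_cos.prodMk continuous_sin)).prodMk
          (continuous_cos.prodMk continuous_sin))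
    fun_prop
  have hRHS : (∫ θ in (0:ℝ)..(2 * π),
        (G1 (cos θ, sin θ) * cos θ + G2 (cos θ, sin θ) * sin θ))
      = 1 / 2 * (∫ θ in (0:ℝ)..(2 * π),
          ((fderiv ℝ v (cos θ, sin θ) (cos θ, sin θ)).1 ^ 2
            + (fderiv ℝ v (cos θ, sin θ) (cos θ, sin θ)).2 ^ 2))
        - π * n ^ 2 - π * (ω₀ * (k : ℝ)) := by
    rw [intervalIntegral.integral_congr (g := fun θ : ℝ =>
      1 / 2 * ((fderiv ℝ v (cos θ, sin θ) (cos θ, sin θ)).1 ^ 2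
          + (fderiv ℝ v (cos θ, sin θ) (cos θ, sin θ)).2 ^ 2) - n ^ 2 / 2 - ω₀ * (k : ℝ) / 2)
      (fun θ _ => hbnd θ)]
    have i1 : IntervalIntegrable (fun θ : ℝ =>
        1 / 2 * ((fderiv ℝ v (cos θ, sin θ) (cos θ, sin θ)).1 ^ 2
          + (fderiv ℝ v (cos θ, sin θ) (cos θ, sin θ)).2 ^ 2)) volume 0 (2 * π) :=
      (continuous_const.mul hΦc).intervalIntegrable _ _
    have i2 : IntervalIntegrable (fun _ : ℝ => n ^ 2 / 2) volume 0 (2 * π) :=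
      intervalIntegrable_const
    have i3 : IntervalIntegrable (fun _ : ℝ => ω₀ * (k : ℝ) / 2) volume 0 (2 * π) :=
      intervalIntegrable_const
    rw [intervalIntegral.integral_sub (i1.sub i2) i3, intervalIntegral.integral_sub i1 i2,
      intervalIntegral.integral_const_mul, intervalIntegral.integral_const,
      intervalIntegral.integral_const]
    simp only [smul_eq_mul]
    ring
  rw [hLHS, hRHS] at hdiv
  linear_combination -hdiv
end

section
/- For b ∈ D (open unit disc in ℂ) with b ≠ 0, the function Φ_b(z) = log|(b - z)(1 - conj(b) z)| satisfies ∂Φ_b/∂ν(z) = 1 for every z ∈ ∂D, where ν is the outward unit normal (radial direction). -/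
/-!
For `‖z‖ = 1` and real `t` one has `‖1 - conj b * (t * z)‖ = ‖z - t * b‖`, so
`Φ_b(t z) = log ‖b - t z‖ + log ‖z - t b‖`. In any real inner product space the derivatives at
`t = 1` of `log ‖a - t v‖` and `log ‖v - t a‖` are `⟪a - v, -v⟫ / ‖a - v‖²` and
`⟪v - a, -a⟫ / ‖a - v‖²`, which add up to `⟪v - a, v - a⟫ / ‖v - a‖² = 1`.
-/

open Complex ComplexConjugate Filter Topology
open scoped RealInnerProductSpace

section InnerProductSpace

variable {F : Type*} [NormedAddCommGroup F] [InnerProductSpace ℝ F]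

theorem HasDerivAt.log_norm {f : ℝ → F} {f' : F} {x : ℝ} (hf : HasDerivAt f f' x)
    (h0 : f x ≠ 0) : HasDerivAt (fun t => Real.log ‖f t‖) (⟪f x, f'⟫ / ‖f x‖ ^ 2) x := by
  have hpos : ‖f x‖ ^ 2 ≠ 0 := by positivity
  refine (((hf.norm_sq.log hpos).div_const 2).congr_deriv (by ring)).congr_of_eventuallyEq
    (.of_forall fun t => ?_)
  simp only [Real.log_pow]
  push_cast
  ring

theorem hasDerivAt_log_norm_sub_smul_mul_norm_sub_smul {a v : F} (h : a ≠ v) :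
    HasDerivAt (fun t : ℝ => Real.log (‖a - t • v‖ * ‖v - t • a‖)) 1 1 := by
  have hline : ∀ p q : F, HasDerivAt (fun t : ℝ => p - t • q) (-q) 1 := fun p q => by
    simpa using ((hasDerivAt_id (1 : ℝ)).smul_const q).const_sub p
  have hav : a - v ≠ 0 := sub_ne_zero.mpr h
  have hva : v - a ≠ 0 := sub_ne_zero.mpr h.symm
  have hsum := ((hline a v).log_norm (by simpa using hav)).add
    ((hline v a).log_norm (by simpa using hva))
  have hderiv : ⟪a - v, -v⟫ / ‖a - v‖ ^ 2 + ⟪v - a, -a⟫ / ‖v - a‖ ^ 2 = 1 := by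
    rw [norm_sub_rev a v, ← add_div, div_eq_one_iff_eq (by positivity),
      ← real_inner_self_eq_norm_sq]
    simp only [inner_sub_left, inner_sub_right, inner_neg_right, real_inner_comm a v]
    ring
  simp only [one_smul, hderiv] at hsum
  refine hsum.congr_of_eventuallyEq ?_
  have hcont : ∀ p q : F, ContinuousAt (fun t : ℝ => ‖p - t • q‖) 1 := fun p q =>
    (hline p q).continuousAt.norm
  filter_upwards [(hcont a v).eventually_ne (y := 0) (by simpa using hav),
    (hcont v a).eventually_ne (y := 0) (by simpa using hva)] with t hat hvt
  exact Real.log_mul hat hvt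

end InnerProductSpace

theorem Complex.norm_one_sub_conj_mul_eq_norm_sub {z : ℂ} (hz : ‖z‖ = 1) (w : ℂ) :
    ‖1 - conj w * z‖ = ‖z - w‖ := by
  have hzz : z * conj z = 1 := by simp [mul_conj', hz]
  calc ‖1 - conj w * z‖ = ‖z * conj (z - w)‖ := by
        rw [map_sub, mul_sub, hzz, mul_comm z]
    _ = ‖z - w‖ := by rw [norm_mul, hz, one_mul, norm_conj]

theorem normal_derivative_log_pair_general (b : ℂ) (hb : ‖b‖ < 1) :
    ∀ z : ℂ, ‖z‖ = 1 →
      HasDerivAt (fun t : ℝ =>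
          Real.log ‖(b - (t : ℂ) * z) *
            (1 - (starRingEnd ℂ) b * ((t : ℂ) * z))‖) 1 1 := by
  intro z hz
  have hbz : b ≠ z := by
    rintro rfl
    exact hb.ne hz
  convert hasDerivAt_log_norm_sub_smul_mul_norm_sub_smul hbz using 2 with t
  rw [norm_mul, real_smul, real_smul, ← Complex.norm_one_sub_conj_mul_eq_norm_sub hz (t * b),
    map_mul, conj_ofReal, mul_left_comm, ← mul_assoc]

/-- For `b` in the unit disc, `b ≠ 0`, the function `Φ_b(z) = log|(b - z)(1 - conj(b) z)|`
has normal (radial) derivative equal to `1` at every point of the unit circle. -/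
theorem normal_derivative_log_pair (b : ℂ) (hb : ‖b‖ < 1) (hb0 : b ≠ 0) :
    ∀ z : ℂ, ‖z‖ = 1 →
      HasDerivAt (fun t : ℝ =>
          Real.log ‖(b - (t : ℂ) * z) *
            (1 - (starRingEnd ℂ) b * ((t : ℂ) * z))‖) 1 1 :=
  normal_derivative_log_pair_general b hb
end
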